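/- Let θ ≥ 1 and x ≥ 2, and set s_θ := (θx − √(θ²x² − 4θ²))/(2θ²) and u_θ := 1 − s_θ. Then 0 < s_θ ≤ 1/θ, and the function g(u) := −(1/2)·θxu − (θ²/4)·(1−u)² − (1/2)·log(1−u) attains its minimum over the interval [1 − 1/θ, 1) exactly at u = u_θ: for every u ∈ [1 − 1/θ, 1), g(u) ≥ g(u_θ). -/

import Mathlib

noncomputable section

/-- The `u`-dependent part of the large-deviation rate function in the regime
`θ(1-u) ≤ 1`: `g(u) = -(1/2)θxu - (θ²/4)(1-u)² - (1/2)log(1-u)`. -/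
def gfun (θ x u : ℝ) : ℝ :=
  -(1 / 2) * (θ * x * u) - θ ^ 2 / 4 * (1 - u) ^ 2 - (1 / 2) * Real.log (1 - u)

/-- `u_θ = 1 - (θx - √(θ²x² - 4θ²))/(2θ²)`, solving `θ²(1-u)² - θx(1-u) + 1 = 0`. -/
def uTheta (θ x : ℝ) : ℝ :=
  1 - (θ * x - Real.sqrt (θ ^ 2 * x ^ 2 - 4 * θ ^ 2)) / (2 * θ ^ 2)

/-!
In the variable `t = 1 - u` one has `g'(u) = q(t) / (2t)` with `q(t) = θ²t² - θxt + 1`, and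
`s_θ = 1 - u_θ` is the smaller root of `q`. Since the roots multiply to `1/θ²`, the identity
`s · q(t) = (t - s)(θ²ts - 1)` shows that on `0 < t ≤ 1/θ` the sign of `q(t)` is that of `s - t`:
`g` decreases on `[1 - 1/θ, u_θ]` and increases on `[u_θ, 1)`.
-/

open Set

theorem IsMinOn.of_hasDerivAt_nonpos_nonneg {f f' : ℝ → ℝ} {a b c : ℝ} (hac : a ≤ c)
    (hcb : c < b) (hf : ∀ u ∈ Ico a b, HasDerivAt f (f' u) u)
    (hf'_nonpos : ∀ u ∈ Ioo a c, f' u ≤ 0) (hf'_nonneg : ∀ u ∈ Ioo c b, 0 ≤ f' u) :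
    IsMinOn f (Ico a b) c := by
  have hanti : AntitoneOn f (Icc a c) :=
    antitoneOn_of_hasDerivWithinAt_nonpos (convex_Icc a c)
      (fun u hu => (hf u ⟨hu.1, hu.2.trans_lt hcb⟩).continuousAt.continuousWithinAt)
      (by
        rw [interior_Icc]
        exact fun u hu => (hf u ⟨hu.1.le, hu.2.trans hcb⟩).hasDerivWithinAt)
      (by rwa [interior_Icc])
  have hmono : MonotoneOn f (Ico c b) :=
    monotoneOn_of_hasDerivWithinAt_nonneg (convex_Ico c b)
      (fun u hu => (hf u ⟨hac.trans hu.1, hu.2⟩).continuousAt.continuousWithinAt)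
      (by
        rw [interior_Ico]
        exact fun u hu => (hf u ⟨hac.trans hu.1.le, hu.2⟩).hasDerivWithinAt)
      (by rwa [interior_Ico])
  intro u hu
  rcases le_total u c with h | h
  · exact hanti ⟨hu.1, h⟩ ⟨hac, le_rfl⟩ h
  · exact hmono ⟨le_rfl, hcb⟩ ⟨h, hu.2⟩ h

def critQuad (θ x t : ℝ) : ℝ := θ ^ 2 * t ^ 2 - θ * x * t + 1

def sTheta (θ x : ℝ) : ℝ := (θ * x - Real.sqrt (θ ^ 2 * x ^ 2 - 4 * θ ^ 2)) / (2 * θ ^ 2)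

theorem uTheta_eq_one_sub_sTheta (θ x : ℝ) : uTheta θ x = 1 - sTheta θ x := rfl

theorem hasDerivAt_gfun (θ x : ℝ) {u : ℝ} (hu : u ≠ 1) :
    HasDerivAt (gfun θ x) (critQuad θ x (1 - u) / (2 * (1 - u))) u := by
  have ht : 1 - u ≠ 0 := sub_ne_zero.mpr hu.symm
  have h1 : HasDerivAt (fun v : ℝ => 1 - v) (-1) u := by
    simpa using (hasDerivAt_id u).const_sub 1
  have h := (((hasDerivAt_id u).const_mul (θ * x)).const_mul (-(1 / 2))).sub
    ((h1.pow 2).const_mul (θ ^ 2 / 4)) |>.sub ((h1.log ht).const_mul (1 / 2))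
  refine h.congr_deriv ?_
  simp only [critQuad]
  field_simp
  ring

theorem critQuad_sTheta {θ x : ℝ} (hθ : θ ≠ 0) (hx : 4 ≤ x ^ 2) :
    critQuad θ x (sTheta θ x) = 0 := by
  have hd : Real.sqrt (θ ^ 2 * x ^ 2 - 4 * θ ^ 2) ^ 2 = θ ^ 2 * x ^ 2 - 4 * θ ^ 2 :=
    Real.sq_sqrt (by nlinarith [sq_nonneg θ])
  simp only [critQuad, sTheta]
  generalize Real.sqrt (θ ^ 2 * x ^ 2 - 4 * θ ^ 2) = d at hd ⊢
  field_simp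
  linear_combination hd

theorem sTheta_pos {θ x : ℝ} (hθ : 0 < θ) (hx : 0 < x) : 0 < sTheta θ x := by
  have : Real.sqrt (θ ^ 2 * x ^ 2 - 4 * θ ^ 2) < θ * x :=
    (Real.sqrt_lt' (by positivity)).mpr (by nlinarith)
  unfold sTheta
  apply div_pos <;> [linarith; positivity]

theorem sTheta_le_inv {θ x : ℝ} (hθ : 0 < θ) (hx : 2 ≤ x) : sTheta θ x ≤ 1 / θ := by
  have : θ * (x - 2) ≤ Real.sqrt (θ ^ 2 * x ^ 2 - 4 * θ ^ 2) :=
    Real.le_sqrt_of_sq_le (by nlinarith)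
  unfold sTheta
  rw [div_le_div_iff₀ (by positivity) hθ]
  nlinarith

theorem mul_critQuad_of_critQuad_eq_zero {θ x s : ℝ} (hs : critQuad θ x s = 0) (t : ℝ) :
    s * critQuad θ x t = (t - s) * (θ ^ 2 * t * s - 1) := by
  simp only [critQuad] at hs ⊢
  linear_combination t * hs

section CritQuadSign

variable {θ x s t : ℝ} (hθ : 0 < θ) (hs : critQuad θ x s = 0) (hs₀ : 0 < s) (hs₁ : s ≤ 1 / θ)
  (ht : t ≤ 1 / θ)
include hθ hs₀ hs₁ ht

theorem sq_mul_mul_le_one : θ ^ 2 * t * s ≤ 1 := by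
  have hθt : θ * t ≤ 1 := (le_div_iff₀' hθ).mp ht
  have hθs : θ * s ≤ 1 := (le_div_iff₀' hθ).mp hs₁
  nlinarith [mul_pos hθ hs₀]

include hs

theorem critQuad_nonneg_of_le_root (hts : t ≤ s) : 0 ≤ critQuad θ x t := by
  have hprod : 0 ≤ s * critQuad θ x t := by
    rw [mul_critQuad_of_critQuad_eq_zero hs t]
    exact mul_nonneg_of_nonpos_of_nonpos (by linarith)
      (by linarith [sq_mul_mul_le_one hθ hs₀ hs₁ ht])
  exact nonneg_of_mul_nonneg_right hprod hs₀

theorem critQuad_nonpos_of_root_le (hst : s ≤ t) : critQuad θ x t ≤ 0 := by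
  have hprod : s * critQuad θ x t ≤ 0 := by
    rw [mul_critQuad_of_critQuad_eq_zero hs t]
    exact mul_nonpos_of_nonneg_of_nonpos (by linarith)
      (by linarith [sq_mul_mul_le_one hθ hs₀ hs₁ ht])
  exact nonpos_of_mul_nonpos_right hprod hs₀

end CritQuadSign

/-- For `θ ≥ 1` and `x ≥ 2`, with `s_θ = (θx - √(θ²x² - 4θ²))/(2θ²)` and `u_θ = 1 - s_θ`,
one has `0 < s_θ ≤ 1/θ` and `g` attains its minimum over `[1 - 1/θ, 1)` at `u_θ`. -/
theorem gfun_min_supercritical (θ x : ℝ) (hθ : 1 ≤ θ) (hx : 2 ≤ x) :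
    0 < (θ * x - Real.sqrt (θ ^ 2 * x ^ 2 - 4 * θ ^ 2)) / (2 * θ ^ 2) ∧
    (θ * x - Real.sqrt (θ ^ 2 * x ^ 2 - 4 * θ ^ 2)) / (2 * θ ^ 2) ≤ 1 / θ ∧
    uTheta θ x ∈ Set.Ico (1 - 1 / θ) 1 ∧
    ∀ u ∈ Set.Ico (1 - 1 / θ) 1, gfun θ x (uTheta θ x) ≤ gfun θ x u := by
  have hθ₀ : 0 < θ := by linarith
  have hs₀ : 0 < sTheta θ x := sTheta_pos hθ₀ (by linarith)
  have hs₁ : sTheta θ x ≤ 1 / θ := sTheta_le_inv hθ₀ hx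
  have hroot : critQuad θ x (sTheta θ x) = 0 := critQuad_sTheta hθ₀.ne' (by nlinarith)
  have hmem : uTheta θ x ∈ Ico (1 - 1 / θ) 1 := by
    rw [uTheta_eq_one_sub_sTheta]
    exact ⟨by linarith, by linarith⟩
  refine ⟨hs₀, hs₁, hmem, ?_⟩
  refine IsMinOn.of_hasDerivAt_nonpos_nonneg hmem.1 hmem.2
    (fun u hu => hasDerivAt_gfun θ x hu.2.ne) ?_ ?_
  · rintro u ⟨hu₁, hu₂⟩
    rw [uTheta_eq_one_sub_sTheta] at hu₂
    exact div_nonpos_of_nonpos_of_nonneg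
      (critQuad_nonpos_of_root_le hθ₀ hroot hs₀ hs₁ (by linarith) (by linarith)) (by linarith)
  · rintro u ⟨hu₁, hu₂⟩
    rw [uTheta_eq_one_sub_sTheta] at hu₁
    exact div_nonneg
      (critQuad_nonneg_of_le_root hθ₀ hroot hs₀ hs₁ (by linarith) (by linarith)) (by linarith)

end
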